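/- arXiv:0812.2599 — 2 statements merged into one kernel-verified Lean document; each statement's English description precedes it below -/
import Mathlib

section
/- Let u, u′ ∈ (ℝ∖{0})^R and v, v′ ∈ (ℝ∖{0})^C, and let E ⊆ R×C be an edge set such that the bipartite graph G = (R, C, E) is connected. If u_i·v_a = u′_i·v′_a for every (i,a) ∈ E, then u_i·v_a = u′_i·v′_a for every (i,a) ∈ R×C. In other words, the entries of a rank-1 matrix with nowhere-vanishing factors are uniquely determined on a connected component of the observation graph. -/
/-! If both factorizations agree on an edge `(i, a)` then `u i / u' i = v' a / v a`. So the
function equal to `u / u'` on rows and to `v' / v` on columns is constant along the edges of the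
connected graph `G`, hence constant; equality of its values at a row `i` and a column `a` is the
claimed identity `u i * v a = u' i * v' a`. -/

namespace SimpleGraph

variable {V α : Type*} {G : SimpleGraph V}

theorem Reachable.apply_eq_of_adj {f : V → α} (hf : ∀ x y, G.Adj x y → f x = f y) {x y : V}
    (h : G.Reachable x y) : f x = f y := by
  obtain ⟨w⟩ := h
  induction w with
  | nil => rfl
  | cons hadj _ ih => exact (hf _ _ hadj).trans ih

theorem Connected.apply_eq_of_fromRel {r : V → V → Prop} (h : (fromRel r).Connected) {f : V → α}
    (hf : ∀ x y, r x y → f x = f y) (x y : V) : f x = f y :=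
  (h x y).apply_eq_of_adj fun _ _ hadj =>
    (fromRel_adj r _ _ |>.1 hadj).2.elim (hf _ _) fun hyx => (hf _ _ hyx).symm

end SimpleGraph

theorem rank_one_determined_on_connected_component_general
    {R C : Type*}
    (E : Set (R × C)) (u u' : R → ℝ) (v v' : C → ℝ)
    (hu' : ∀ i, u' i ≠ 0)
    (hv : ∀ a, v a ≠ 0)
    (hconn : (SimpleGraph.fromRel (fun x y : R ⊕ C =>
        ∃ p ∈ E, x = Sum.inl p.1 ∧ y = Sum.inr p.2)).Connected)
    (hagree : ∀ p ∈ E, u p.1 * v p.2 = u' p.1 * v' p.2) :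
    ∀ i a, u i * v a = u' i * v' a := by
  have hratio (i : R) (a : C) : u i / u' i = v' a / v a ↔ u i * v a = u' i * v' a := by
    rw [div_eq_div_iff (hu' i) (hv a), mul_comm (v' a)]
  intro i a
  refine (hratio i a).1 <| hconn.apply_eq_of_fromRel
    (f := Sum.elim (fun i => u i / u' i) (fun a => v' a / v a)) ?_ (.inl i) (.inr a)
  rintro _ _ ⟨⟨i, a⟩, hp, rfl, rfl⟩
  exact (hratio i a).2 (hagree _ hp)

theorem rank_one_determined_on_connected_component
    {R C : Type*} [Fintype R] [Fintype C]
    (E : Set (R × C)) (u u' : R → ℝ) (v v' : C → ℝ)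
    (hu : ∀ i, u i ≠ 0) (hu' : ∀ i, u' i ≠ 0)
    (hv : ∀ a, v a ≠ 0) (hv' : ∀ a, v' a ≠ 0)
    (hconn : (SimpleGraph.fromRel (fun x y : R ⊕ C =>
        ∃ p ∈ E, x = Sum.inl p.1 ∧ y = Sum.inr p.2)).Connected)
    (hagree : ∀ p ∈ E, u p.1 * v p.2 = u' p.1 * v' p.2) :
    ∀ i a, u i * v a = u' i * v' a :=
  rank_one_determined_on_connected_component_general E u u' v v' hu' hv hconn hagree
end

section
/- Let d̄ > 0, 0 ≤ Δ < d̄, ε > 0 and h ≥ 0 be real numbers. Then sup{ x ∈ [0, d̄) : h + ε·log( (d̄² − x²) / (d̄² − Δ²) ) ≥ 0 } = √( d̄² − (d̄² − Δ²)·e^{−h/ε} ). In particular, the relaxed upper bound δ̄^u(ε, α, Δ) = sup{ d(p,q) : φ^u_Δ(p,q) ≥ 0 } equals { d̄² − (d̄² − Δ²)·exp( −( H̄(p|p₀) + α·H̄(q|q₀) ) / ε ) }^{1/2} whenever the values d(p,q) sweep a dense subset of [Δ, d̄). -/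
/-!
Since `log` and `exp` are increasing inverse bijections, the constraint
`h + ε·log((d̄² − x²)/(d̄² − Δ²)) ≥ 0` is equivalent to `x² ≤ d̄² − (d̄² − Δ²)·e^{−h/ε}`.
For `h ≥ 0` the right-hand side lies in `[Δ², d̄²)`, so the constraint set is the closed
interval from `0` to its square root, which is therefore the supremum.
-/

open Set

theorem Real.add_mul_log_div_nonneg_iff {h ε D y : ℝ} (hε : 0 < ε) (hD : 0 < D) (hy : 0 < y) :
    0 ≤ h + ε * Real.log (y / D) ↔ D * Real.exp (-h / ε) ≤ y := by
  calc 0 ≤ h + ε * Real.log (y / D)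
      ↔ -h / ε ≤ Real.log (y / D) := by
        rw [div_le_iff₀ hε]
        constructor <;> intro <;> linarith
    _ ↔ Real.exp (-h / ε) ≤ y / D := Real.le_log_iff_exp_le (div_pos hy hD)
    _ ↔ D * Real.exp (-h / ε) ≤ y := by rw [le_div_iff₀ hD, mul_comm]

theorem Real.setOf_mem_Ico_sq_le_eq_Icc_sqrt {c A : ℝ} (hc : 0 < c) (hA : 0 ≤ A)
    (hAc : A < c ^ 2) :
    {x : ℝ | x ∈ Ico 0 c ∧ x ^ 2 ≤ A} = Icc 0 (Real.sqrt A) := by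
  have hsqrt_lt : Real.sqrt A < c := (Real.sqrt_lt' hc).mpr hAc
  ext x
  constructor
  · rintro ⟨⟨hx0, -⟩, hxA⟩
    exact ⟨hx0, (Real.le_sqrt hx0 hA).mpr hxA⟩
  · rintro ⟨hx0, hxA⟩
    exact ⟨⟨hx0, hxA.trans_lt hsqrt_lt⟩, (Real.le_sqrt hx0 hA).mp hxA⟩

theorem sSup_relaxed_constraint_set (dbar Δ ε h : ℝ)
    (hdbar : 0 < dbar) (hΔ0 : 0 ≤ Δ) (hΔ : Δ < dbar) (hε : 0 < ε) (hh : 0 ≤ h) :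
    sSup {x : ℝ | x ∈ Set.Ico 0 dbar ∧
        0 ≤ h + ε * Real.log ((dbar ^ 2 - x ^ 2) / (dbar ^ 2 - Δ ^ 2))} =
      Real.sqrt (dbar ^ 2 - (dbar ^ 2 - Δ ^ 2) * Real.exp (-h / ε)) := by
  set D := dbar ^ 2 - Δ ^ 2
  have hD : 0 < D := by nlinarith
  have hexp_pos : 0 < Real.exp (-h / ε) := Real.exp_pos _
  have hexp_le_one : Real.exp (-h / ε) ≤ 1 :=
    Real.exp_le_one_iff.mpr (div_nonpos_of_nonpos_of_nonneg (by linarith) hε.le)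
  have hset : {x : ℝ | x ∈ Ico 0 dbar ∧ 0 ≤ h + ε * Real.log ((dbar ^ 2 - x ^ 2) / D)} =
      {x : ℝ | x ∈ Ico 0 dbar ∧ x ^ 2 ≤ dbar ^ 2 - D * Real.exp (-h / ε)} := by
    ext x
    refine and_congr_right fun ⟨hx0, hxd⟩ => ?_
    rw [Real.add_mul_log_div_nonneg_iff hε hD (by nlinarith)]
    constructor <;> intro <;> linarith
  rw [hset, Real.setOf_mem_Ico_sq_le_eq_Icc_sqrt hdbar (by nlinarith) (by nlinarith),
    csSup_Icc (Real.sqrt_nonneg _)]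
end
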